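/- Let q = 2^m with m a positive integer. The additive (2-linearized) map L_1(X) = X + X^2 + X^{q^2} on F_{q^3} is bijective if and only if m is not congruent to 1 modulo 3. -/

import Mathlib

/-!
In characteristic 2 the map `L x = x + x ^ 2 + x ^ q ^ 2` is additive, so it is bijective iff its
kernel is trivial. Applying `y ↦ y ^ q ^ 2` three times to `x ^ q ^ 2 = x + x ^ 2` and using
`x ^ q ^ 3 = x` gives `(x + x ^ 2 + x ^ 4) ^ 2 = 0`, so a nonzero kernel element is a root of
`X ^ 3 + X + 1`, hence lies in `𝔽₈`. On `𝔽₈` the map `x ↦ x ^ q ^ 2` is `x ↦ x ^ 2 ^ (2m mod 3)`,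
and a root of `X ^ 3 + X + 1` is killed by `L` exactly when `x ^ q ^ 2 = x ^ 4`, i.e. when
`m ≡ 1 [MOD 3]`. Such a root exists in `F` because `7 ∣ 8 ^ m - 1`.
-/

lemma pow_two_pow_eq_pow_two_pow_mod_three {M : Type*} [Monoid M] {x : M} (hx : x ^ 8 = x)
    (k : ℕ) : x ^ 2 ^ k = x ^ 2 ^ (k % 3) := by
  have h8 : ∀ a : ℕ, x ^ 8 ^ a = x := by
    intro a
    induction a with
    | zero => simp
    | succ n ih => rw [pow_succ, pow_mul, ih, hx]
  conv_lhs => rw [← Nat.div_add_mod k 3, pow_add, pow_mul, pow_mul]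
  norm_num [h8]

section CharTwo

variable {F : Type*} [Field F] [CharP F 2]

variable (F) in
def linearizedTrinomial (m : ℕ) : F →+ F :=
  AddMonoidHom.id F + (frobenius F 2 : F →+ F) + (iterateFrobenius F 2 (m * 2) : F →+ F)

lemma linearizedTrinomial_apply (m : ℕ) (x : F) :
    linearizedTrinomial F m x = x + x ^ 2 + x ^ (2 ^ m) ^ 2 := by
  simp [linearizedTrinomial, frobenius_def, iterateFrobenius_def, pow_mul]

lemma pow_eight_eq_self_of_cube_add_self_add_one_eq_zero {x : F} (hx : x ^ 3 + x + 1 = 0) :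
    x ^ 8 = x := by
  linear_combination (x ^ 5 - x ^ 3 - x ^ 2 + x + 2) * hx -
    (2 * x + 1) * CharTwo.two_eq_zero (R := F)

lemma add_sq_add_pow_two_pow_eq_zero_iff {x : F} (hx : x ^ 3 + x + 1 = 0) (k : ℕ) :
    x + x ^ 2 + x ^ 2 ^ k = 0 ↔ k % 3 = 2 := by
  have hx0 : x ≠ 0 := by rintro rfl; simp at hx
  rw [pow_two_pow_eq_pow_two_pow_mod_three (pow_eight_eq_self_of_cube_add_self_add_one_eq_zero hx)]
  have : k % 3 < 3 := Nat.mod_lt k (by norm_num)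
  interval_cases k % 3
  · have : x + x ^ 2 + x = x ^ 2 := by linear_combination x * CharTwo.two_eq_zero (R := F)
    simpa [this] using hx0
  · have : x + x ^ 2 + x ^ 2 = x := by linear_combination x ^ 2 * CharTwo.two_eq_zero (R := F)
    simpa [this] using hx0
  · simp only [iff_true]
    linear_combination x * hx

lemma cube_add_self_add_one_eq_zero_of_linearizedTrinomial_eq_zero {m : ℕ} {x : F}
    (hx : x ^ (2 ^ m) ^ 3 = x) (hx0 : x ≠ 0) (hL : linearizedTrinomial F m x = 0) :
    x ^ 3 + x + 1 = 0 := by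
  set φ := iterateFrobenius F 2 (m * 2)
  have hφx : φ x = x + x ^ 2 := by
    simp only [linearizedTrinomial, AddMonoidHom.add_apply] at hL
    exact (CharTwo.add_eq_zero.mp hL).symm
  have hφ3 : φ (φ (φ x)) = x := by
    simp only [φ, iterateFrobenius_def, ← pow_mul]
    rw [show 2 ^ (m * 2) * 2 ^ (m * 2) * 2 ^ (m * 2) = (2 ^ m) ^ 3 * (2 ^ m) ^ 3 by ring,
      pow_mul, hx, hx]
  simp only [hφx, map_add, map_pow] at hφ3
  have hsq : (x + x ^ 2 + x ^ 4) ^ 2 = 0 := by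
    linear_combination hφ3 - (x ^ 2 + 2 * x ^ 3 + 4 * x ^ 4 + 4 * x ^ 5 + 3 * x ^ 6 + 2 * x ^ 7) *
      CharTwo.two_eq_zero (R := F)
  have hprod : x * (x ^ 3 + x + 1) = 0 := by linear_combination (pow_eq_zero_iff two_ne_zero).mp hsq
  exact (mul_eq_zero.mp hprod).resolve_left hx0

lemma exists_cube_add_self_add_one_eq_zero_of_pow_seven {v : F} (hv7 : v ^ 7 = 1) (hv1 : v ≠ 1) :
    ∃ x : F, x ^ 3 + x + 1 = 0 := by
  -- Over `𝔽₂`, `X ^ 7 - 1 = (X + 1)(X ^ 3 + X + 1)(X ^ 3 + X ^ 2 + 1)`, and the second cubic is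
  -- the reciprocal of the first, so `v⁻¹ = v ^ 6` is a root of `X ^ 3 + X + 1` in that case.
  have hsplit : (v + 1) * ((v ^ 3 + v + 1) * (v ^ 3 + v ^ 2 + 1)) = 0 := by
    linear_combination hv7 +
      (1 + v + v ^ 2 + 2 * v ^ 3 + 2 * v ^ 4 + v ^ 5 + v ^ 6) * CharTwo.two_eq_zero (R := F)
  have hv : v + 1 ≠ 0 := fun h => hv1 (CharTwo.add_eq_zero.mp h)
  rcases mul_eq_zero.mp ((mul_eq_zero.mp hsplit).resolve_left hv) with h | h
  · exact ⟨v, h⟩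
  · refine ⟨v ^ 6, ?_⟩
    linear_combination (v ^ 4 + v ^ 11) * hv7 + (v ^ 3 - v ^ 2 + 2 * v - 3) * h +
      (2 - v + 2 * v ^ 2) * CharTwo.two_eq_zero (R := F)

lemma exists_cube_add_self_add_one_eq_zero [Fintype F] (h7 : 7 ∣ Fintype.card F - 1) :
    ∃ x : F, x ^ 3 + x + 1 = 0 := by
  classical
  have : Fact (Nat.Prime 7) := ⟨by norm_num⟩
  obtain ⟨u, hu⟩ := exists_prime_orderOf_dvd_card (G := Fˣ) 7 (Fintype.card_units (α := F) ▸ h7)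
  refine exists_cube_add_self_add_one_eq_zero_of_pow_seven (v := u) ?_ ?_
  · rw [← Units.val_pow_eq_pow_val, ← hu, pow_orderOf_eq_one, Units.val_one]
  · rw [Ne, Units.val_eq_one]
    rintro rfl
    simp at hu

end CharTwo

theorem stmt_9_general (m : ℕ) (F : Type*) [Field F] [Fintype F]
    (hF : Fintype.card F = (2^m)^3) :
    Function.Bijective (fun x : F => x + x^2 + x^((2^m)^2)) ↔ m % 3 ≠ 1 := by
  have : CharP F 2 := charP_of_card_eq_prime_pow (hF.trans (pow_mul 2 m 3).symm)
  have hfun : (fun x : F => x + x^2 + x^((2^m)^2)) = linearizedTrinomial F m :=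
    funext fun x => (linearizedTrinomial_apply m x).symm
  have hexp : (2 ^ m) ^ 2 = 2 ^ (m * 2) := (pow_mul 2 m 2).symm
  rw [hfun, ← Finite.injective_iff_bijective, injective_iff_map_eq_zero]
  constructor
  · intro hinj hm1
    have h7 : 7 ∣ Fintype.card F - 1 := by
      rw [hF, ← pow_mul, mul_comm, pow_mul]
      simpa using Nat.sub_dvd_pow_sub_pow 8 1 m
    obtain ⟨x, hx⟩ := exists_cube_add_self_add_one_eq_zero h7
    have hLx : linearizedTrinomial F m x = 0 := by
      rw [linearizedTrinomial_apply, hexp, add_sq_add_pow_two_pow_eq_zero_iff hx]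
      omega
    simp [hinj x hLx] at hx
  · intro hm1 x hLx
    by_contra hx0
    have hq : x ^ (2 ^ m) ^ 3 = x := hF ▸ FiniteField.pow_card x
    have hx := cube_add_self_add_one_eq_zero_of_linearizedTrinomial_eq_zero hq hx0 hLx
    rw [linearizedTrinomial_apply, hexp, add_sq_add_pow_two_pow_eq_zero_iff hx] at hLx
    omega

theorem stmt_9 (m : ℕ) (hm : 0 < m) (F : Type*) [Field F] [Fintype F]
    (hF : Fintype.card F = (2^m)^3) :
    Function.Bijective (fun x : F => x + x^2 + x^((2^m)^2)) ↔ m % 3 ≠ 1 :=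
  stmt_9_general m F hF
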